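/- arXiv:2208.00577 — 2 statements merged into one kernel-verified Lean document; each statement's English description precedes it below -/
import Mathlib

section
/- Let m ≥ 1 and ℓ ≥ 2. Suppose x = (x_0,…,x_ℓ) is an (ℓ,m)-Dyck path such that (x_0−m)+(x_1−m)+⋯+(x_j−m) ≤ −m for all 1 ≤ j ≤ ℓ−1. Then x' = (x_1, …, x_{ℓ−1}, x'_ℓ), where x'_ℓ = mℓ − (x_1+⋯+x_{ℓ−1}), is an (ℓ−1,m)-Dyck path, and degr(x) = x_0·(ℓ−1) + degr(x'). -/
open Finset

/-- Partial sum of the first `i` entries of a sequence. -/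
def pSum (x : ℕ → ℤ) (i : ℕ) : ℤ := ∑ k ∈ Finset.range i, x k

/-- An `(ℓ,m)`-Dyck path in step coordinates, encoded as a sequence `ℕ → ℤ` of
nonnegative integers vanishing beyond index `ℓ`. -/
def IsDyck (ℓ m : ℕ) (x : ℕ → ℤ) : Prop :=
  (∀ i, 0 ≤ x i) ∧
  (∀ i < ℓ, pSum x (i + 1) ≤ (m : ℤ) * (i + 1)) ∧
  pSum x (ℓ + 1) = (m : ℤ) * (ℓ + 1) ∧
  (∀ i, ℓ < i → x i = 0)

/-- `δ⁺_{ij}(x) = min(x_i, max(0, (x_i−m)+⋯+(x_j−m)−1))`. -/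
def deltaP (m : ℕ) (x : ℕ → ℤ) (i j : ℕ) : ℤ :=
  min (x i) (max 0 ((∑ k ∈ Finset.Icc i j, (x k - (m : ℤ))) - 1))

/-- `δ⁻_{ij}(x) = min(x_{i−1}, max(0, (m−x_i)+⋯+(m−x_j)))`. -/
def deltaM (m : ℕ) (x : ℕ → ℤ) (i j : ℕ) : ℤ :=
  min (x (i - 1)) (max 0 (∑ k ∈ Finset.Icc i j, ((m : ℤ) - x k)))

/-- `degr⁺(x) = Σ_{1 ≤ i ≤ j ≤ ℓ−1} δ⁺_{ij}(x)`. -/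
def degrP (ℓ m : ℕ) (x : ℕ → ℤ) : ℤ :=
  ∑ i ∈ Finset.Icc 1 (ℓ - 1), ∑ j ∈ Finset.Icc i (ℓ - 1), deltaP m x i j

/-- `degr⁻(x) = Σ_{1 ≤ i ≤ j ≤ ℓ−1} δ⁻_{ij}(x)`. -/
def degrM (ℓ m : ℕ) (x : ℕ → ℤ) : ℤ :=
  ∑ i ∈ Finset.Icc 1 (ℓ - 1), ∑ j ∈ Finset.Icc i (ℓ - 1), deltaM m x i j

/-- `degr(x) = degr⁺(x) + degr⁻(x)`. -/
def degr (ℓ m : ℕ) (x : ℕ → ℤ) : ℤ := degrP ℓ m x + degrM ℓ m x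

/-- Position coordinates `a_i = (m−x_0)+⋯+(m−x_{i−1})`, with the convention
`a_s = 0` for `s > ℓ`. -/
def dyckPos (ℓ m : ℕ) (x : ℕ → ℤ) (i : ℕ) : ℤ :=
  if i ≤ ℓ then (m : ℤ) * i - pSum x i else 0

/-- `area(x) = a_1 + ⋯ + a_ℓ = M − (ℓ·x_0 + ⋯ + 1·x_{ℓ−1})`. -/
def area (ℓ m : ℕ) (x : ℕ → ℤ) : ℤ := ∑ i ∈ Finset.Icc 1 ℓ, dyckPos ℓ m x i

/-- `point(x)`: the minimal `r ≤ ℓ` such that `a_r − a_ℓ > −m`. -/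
noncomputable def dyckPoint (ℓ m : ℕ) (x : ℕ → ℤ) : ℕ :=
  sInf {r : ℕ | -(m : ℤ) < dyckPos ℓ m x r - dyckPos ℓ m x ℓ}

/-- `pair(x)`: the minimal `r < ℓ` such that `a_r − a_{r+2} ≥ −m`. -/
noncomputable def dyckPair (ℓ m : ℕ) (x : ℕ → ℤ) : ℕ :=
  sInf {r : ℕ | r < ℓ ∧ -(m : ℤ) ≤ dyckPos ℓ m x r - dyckPos ℓ m x (r + 2)}

/-- `x` is rightable at `r`. -/
def RightableAt (ℓ m : ℕ) (x : ℕ → ℤ) (r : ℕ) : Prop :=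
  dyckPoint ℓ m x = r ∧ r < ℓ ∧
    ∀ i, i + 2 ≤ r → dyckPos ℓ m x i - dyckPos ℓ m x (i + 2) < -(m : ℤ)

/-- `x` is leftable at `r`. -/
def LeftableAt (ℓ m : ℕ) (x : ℕ → ℤ) (r : ℕ) : Prop :=
  dyckPair ℓ m x = r ∧ dyckPos ℓ m x (r + 1) - dyckPos ℓ m x ℓ ≤ (m : ℤ) + 1

/-- Reconstruct step coordinates from position coordinates:
`x_i = m + a_i − a_{i+1}` (with `a_{ℓ+1} = 0`), vanishing beyond `ℓ`. -/
def fromPos (ℓ m : ℕ) (a : ℕ → ℤ) : ℕ → ℤ :=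
  fun i => if i ≤ ℓ then (m : ℤ) + a i - a (i + 1) else 0

/-- Position coordinates of `cycleright(r,x)`:
`[a_0,…,a_r, a_ℓ+1, a_{r+1},…,a_{ℓ−1}]`. -/
def rightPosSeq (ℓ m : ℕ) (x : ℕ → ℤ) (r : ℕ) : ℕ → ℤ := fun i =>
  if i ≤ r then dyckPos ℓ m x i
  else if i = r + 1 then dyckPos ℓ m x ℓ + 1
  else if i ≤ ℓ then dyckPos ℓ m x (i - 1)
  else 0

/-- `right(x)` when `x` is rightable at `r`. -/
def rightMap (ℓ m : ℕ) (x : ℕ → ℤ) (r : ℕ) : ℕ → ℤ := fromPos ℓ m (rightPosSeq ℓ m x r)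

/-- Position coordinates of `cycleleft(r,x)`:
`[a_0,…,a_r, a_{r+2},…,a_ℓ, a_{r+1}−1]`. -/
def leftPosSeq (ℓ m : ℕ) (x : ℕ → ℤ) (r : ℕ) : ℕ → ℤ := fun i =>
  if i ≤ r then dyckPos ℓ m x i
  else if i < ℓ then dyckPos ℓ m x (i + 1)
  else if i = ℓ then dyckPos ℓ m x (r + 1) - 1
  else 0

/-- `left(x)` when `x` is leftable at `r`. -/
def leftMap (ℓ m : ℕ) (x : ℕ → ℤ) (r : ℕ) : ℕ → ℤ := fromPos ℓ m (leftPosSeq ℓ m x r)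

def Rightable (ℓ m : ℕ) (x : ℕ → ℤ) : Prop := ∃ r, RightableAt ℓ m x r

def Leftable (ℓ m : ℕ) (x : ℕ → ℤ) : Prop := ∃ r, LeftableAt ℓ m x r

/-- One application of `right` (meaningful when `x` is rightable). -/
noncomputable def rightStep (ℓ m : ℕ) (x : ℕ → ℤ) : ℕ → ℤ := rightMap ℓ m x (dyckPoint ℓ m x)

/-- One application of `left` (meaningful when `x` is leftable). -/
noncomputable def leftStep (ℓ m : ℕ) (x : ℕ → ℤ) : ℕ → ℤ := leftMap ℓ m x (dyckPair ℓ m x)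

/-- `y = lowest(x)`: `y = rightⁱ(x)` with all intermediate steps rightable and
`y` itself not rightable. -/
def IsLowestOf (ℓ m : ℕ) (x y : ℕ → ℤ) : Prop :=
  (∃ k, (∀ j < k, Rightable ℓ m ((rightStep ℓ m)^[j] x)) ∧ y = (rightStep ℓ m)^[k] x) ∧
    ¬ Rightable ℓ m y

/-- `x` is disconnected: some `leftⁱ(x)` is a Dyck path that is not leftable. -/
def Disconnected (ℓ m : ℕ) (x : ℕ → ℤ) : Prop :=
  ∃ i, IsDyck ℓ m ((leftStep ℓ m)^[i] x) ∧ ¬ Leftable ℓ m ((leftStep ℓ m)^[i] x)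

def ConnectedPath (ℓ m : ℕ) (x : ℕ → ℤ) : Prop := ¬ Disconnected ℓ m x

/-- `string(v₀) = {rightⁱ(v₀) : 0 ≤ i ≤ b}` where `right^b(v₀) = lowest(v₀)`. -/
def stringSet (ℓ m : ℕ) (v0 : ℕ → ℤ) : Set (ℕ → ℤ) :=
  {y | ∃ i, (∀ j < i, Rightable ℓ m ((rightStep ℓ m)^[j] v0)) ∧ y = (rightStep ℓ m)^[i] v0}

/-- A matrix in `𝐌_{m×ℓ}`, encoded as `M : ℕ → ℕ → Option Bool`
(`some false` = 0, `some true` = 1, `none` = ∗; entries outside the `m×ℓ`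
range are normalized to `none`). -/
def IsGoodMatrix (m ℓ : ℕ) (M : ℕ → ℕ → Option Bool) : Prop :=
  (∀ i j, m ≤ i ∨ ℓ ≤ j → M i j = none) ∧
  (∀ i j i' j', i < m → j < ℓ → i' < m → j' < ℓ → M i j = none →
    (i < i' ∨ (i = i' ∧ j < j')) → M i' j' = none) ∧
  M 0 0 = some false ∧
  (∀ i j, i < m → j < ℓ → M i j ≠ none →
    (M i j = some true ∨
      ∃ i' j', i' < m ∧ j' < ℓ ∧ (i < i' ∨ (i = i' ∧ j < j')) ∧ M i' j' ≠ none)) ∧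
  (∀ i j, M i j = some false → M (i + 1) j ≠ some true)

/-- `|M|`: the number of `(0,1)` pairs of entries of `M` in contact. -/
def contactCount (m ℓ : ℕ) (M : ℕ → ℕ → Option Bool) : ℕ :=
  (((Finset.range m ×ˢ Finset.range ℓ) ×ˢ (Finset.range m ×ˢ Finset.range ℓ)).filter
    fun p => M p.1.1 p.1.2 = some false ∧ M p.2.1 p.2.2 = some true ∧
      ((p.2.1 = p.1.1 ∧ p.1.2 < p.2.2) ∨ (p.2.1 = p.1.1 + 1 ∧ p.2.2 ≤ p.1.2))).card

/-- `h(M)`: the number of `0` entries of `M`. -/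
def zeroCount (m ℓ : ℕ) (M : ℕ → ℕ → Option Bool) : ℕ :=
  ((Finset.range m ×ˢ Finset.range ℓ).filter fun p => M p.1 p.2 = some false).card

/-- `w(M)`: the number of `1` entries of `M`. -/
def oneCount (m ℓ : ℕ) (M : ℕ → ℕ → Option Bool) : ℕ :=
  ((Finset.range m ×ˢ Finset.range ℓ).filter fun p => M p.1 p.2 = some true).card

/-- A partition with all parts ≤ `b`, as a weakly decreasing list of positive
integers. -/
def IsPartitionList (b : ℕ) (L : List ℕ) : Prop :=
  L.Pairwise (· ≥ ·) ∧ ∀ p ∈ L, 0 < p ∧ p ≤ b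

/-- The `(ℓ−1)`-width `w^{ℓ−1}(λ)`: the sum of the lengths of the
`(ℓ−1)`-hook rows of `λ` (row 1 is a hook row; if row `i` is a hook row, so is
row `i + ℓ − λ_i`). -/
def hookWidth (ℓ : ℕ) : List ℕ → ℕ
  | [] => 0
  | p :: rest => p + hookWidth ℓ (rest.drop (ℓ - p - 1))
  termination_by L => L.length
  decreasing_by
    simp only [List.length_drop, List.length_cons]
    omega

/-- The number of `1` entries in column `j` of `M`. -/
def colOnes (m : ℕ) (M : ℕ → ℕ → Option Bool) (j : ℕ) : ℕ :=
  ((Finset.range m).filter fun i => M i j = some true).card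

/-- The map `f`: the path with position coordinates `[0,a_1,…,a_ℓ]` where `a_j`
is the number of `1` entries in column `j` of `M`. -/
def pathOfMatrix (ℓ m : ℕ) (M : ℕ → ℕ → Option Bool) : ℕ → ℤ :=
  fromPos ℓ m fun i => if i = 0 then 0 else if i ≤ ℓ then (colOnes m M (i - 1) : ℤ) else 0

/-- The number of `1` entries in contact with the `0` entry at `(i,j)`. -/
def zContacts (m ℓ : ℕ) (M : ℕ → ℕ → Option Bool) (i j : ℕ) : ℕ :=
  ((Finset.range m ×ˢ Finset.range ℓ).filter
    fun q => M q.1 q.2 = some true ∧ ((q.1 = i ∧ j < q.2) ∨ (q.1 = i + 1 ∧ q.2 ≤ j))).card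

/-- The number of `0` entries strictly before `(i,j)` in row-reading order. -/
def zIndex (m ℓ : ℕ) (M : ℕ → ℕ → Option Bool) (i j : ℕ) : ℕ :=
  ((Finset.range m ×ˢ Finset.range ℓ).filter
    fun q => M q.1 q.2 = some false ∧ (q.1 < i ∨ (q.1 = i ∧ q.2 < j))).card

/-- `M` realizes the partition `L`: the `i`-th `0` entry of `M` in row-reading
order is in contact with exactly `L_i` entries equal to `1`. -/
def MatRealizes (m ℓ : ℕ) (M : ℕ → ℕ → Option Bool) (L : List ℕ) : Prop :=
  zeroCount m ℓ M = L.length ∧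
  ∀ i j, i < m → j < ℓ → M i j = some false →
    zContacts m ℓ M i j = L.getD (zIndex m ℓ M i j) 0

/-- `x = f(g(L))` for the bijections `f`, `g` (characterized relationally). -/
def IsFG (ℓ m : ℕ) (L : List ℕ) (x : ℕ → ℤ) : Prop :=
  ∃ M, IsGoodMatrix m ℓ M ∧ contactCount m ℓ M < (ℓ - 1) * m ∧ MatRealizes m ℓ M L ∧
    x = pathOfMatrix ℓ m M

/-- The partition with `p i` parts of size `ℓ−1−i`, for `0 ≤ i ≤ ℓ−2`. -/
def partitionOfCounts (ℓ : ℕ) (p : ℕ → ℕ) : List ℕ :=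
  (List.range (ℓ - 1)).flatMap fun i => List.replicate (p i) (ℓ - 1 - i)

/-- `M = m·ℓ(ℓ+1)/2`, the maximal possible area. -/
def MVal (ℓ m : ℕ) : ℕ := m * ℓ * (ℓ + 1) / 2

/-- The predicate `extendable(ℓ,m,d)`. -/
def Extendable (ℓ m : ℕ) (d : ℤ) : Prop :=
  ∃ ext : List ℕ → Set (ℕ → ℤ),
    (∀ L, IsPartitionList (ℓ - 1) L → (L.sum : ℤ) = d →
      (ext L ⊆ {w | IsDyck ℓ m w ∧ degr ℓ m w = d ∧ Disconnected ℓ m w}) ∧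
      (∀ w w', w ∈ ext L → w' ∈ ext L → area ℓ m w = area ℓ m w' → w = w') ∧
      (∀ v0, IsFG ℓ m L v0 → ∀ vs, IsLowestOf ℓ m v0 vs →
        area ℓ m vs ≤ (MVal ℓ m : ℤ) - L.sum - L.length ∧
        ∀ a : ℤ, (area ℓ m vs < a ∧ a ≤ (MVal ℓ m : ℤ) - L.sum - L.length) ↔
          ∃ w ∈ ext L, area ℓ m w = a)) ∧
    ({w | IsDyck ℓ m w ∧ degr ℓ m w = d ∧ Disconnected ℓ m w} =
      ⋃ L ∈ {L : List ℕ | IsPartitionList (ℓ - 1) L ∧ (L.sum : ℤ) = d}, ext L) ∧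
    (∀ L L', IsPartitionList (ℓ - 1) L → (L.sum : ℤ) = d →
      IsPartitionList (ℓ - 1) L' → (L'.sum : ℤ) = d → L ≠ L' → ext L ∩ ext L' = ∅)

/-!
The hypothesis says that `(m − x_1) + ⋯ + (m − x_j) ≥ x_0` for `1 ≤ j ≤ ℓ − 1`. In particular
`x_1 + ⋯ + x_j ≤ mj`, which is all `x'` needs to be a Dyck path. In the triangle `1 ≤ i ≤ j ≤ ℓ − 1`
defining `degr x`, the same bound makes every `δ⁺_{1j}` vanish and every `δ⁻_{1j}` equal `x_0`, so
the first row contributes `x_0 (ℓ − 1)`; the rows `i ≥ 2` form the triangle of `x'`, shifted by one.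
-/

lemma sum_Icc_add_one (f : ℕ → ℤ) (a b : ℕ) :
    ∑ k ∈ Icc a b, f (k + 1) = ∑ k ∈ Icc (a + 1) (b + 1), f k := by
  rw [← map_add_right_Icc, sum_map]
  rfl

lemma sum_range_add_one (f : ℕ → ℤ) (n : ℕ) :
    ∑ k ∈ range n, f (k + 1) = ∑ k ∈ Icc 1 n, f k := by
  rw [range_eq_Ico, sum_Ico_add', Ico_add_one_right_eq_Icc, zero_add]

lemma sum_triangle_succ (d : ℕ → ℕ → ℤ) (n : ℕ) :
    ∑ i ∈ Icc 1 (n + 1), ∑ j ∈ Icc i (n + 1), d i j =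
      ∑ j ∈ Icc 1 (n + 1), d 1 j + ∑ i ∈ Icc 1 n, ∑ j ∈ Icc i n, d (i + 1) (j + 1) := by
  nth_rw 1 [← insert_Icc_add_one_left_eq_Icc (by omega : 1 ≤ n + 1)]
  rw [sum_insert (by simp), ← sum_Icc_add_one (fun i => ∑ j ∈ Icc i (n + 1), d i j)]
  simp only [sum_Icc_add_one]

lemma sum_sub_eq_neg_sum_sub {ι : Type*} (s : Finset ι) (a : ℤ) (f : ι → ℤ) :
    ∑ k ∈ s, (a - f k) = -∑ k ∈ s, (f k - a) := by
  rw [← sum_neg_distrib]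
  simp only [neg_sub]

section Delta

variable {m : ℕ} {x y : ℕ → ℤ} {i j : ℕ}

lemma deltaP_eq_zero (hxi : 0 ≤ x i) (h : -1 ≤ ∑ k ∈ Icc i j, ((m : ℤ) - x k)) :
    deltaP m x i j = 0 := by
  rw [sum_sub_eq_neg_sum_sub] at h
  rw [deltaP, max_eq_left (by linarith), min_eq_right hxi]

lemma deltaM_eq_of_le (hx : 0 ≤ x (i - 1)) (h : x (i - 1) ≤ ∑ k ∈ Icc i j, ((m : ℤ) - x k)) :
    deltaM m x i j = x (i - 1) := by
  rw [deltaM, max_eq_right (hx.trans h), min_eq_left h]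

lemma sum_Icc_of_shift (f : ℤ → ℤ) (hy : ∀ k ≤ j, y k = x (k + 1)) :
    ∑ k ∈ Icc i j, f (y k) = ∑ k ∈ Icc (i + 1) (j + 1), f (x k) := by
  rw [← sum_Icc_add_one (fun k => f (x k))]
  exact sum_congr rfl fun k hk => by rw [hy k (mem_Icc.1 hk).2]

lemma deltaP_of_shift (hy : ∀ k ≤ j, y k = x (k + 1)) (hij : i ≤ j) :
    deltaP m y i j = deltaP m x (i + 1) (j + 1) := by
  rw [deltaP, deltaP, hy i hij, sum_Icc_of_shift (· - (m : ℤ)) hy]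

lemma deltaM_of_shift (hy : ∀ k ≤ j, y k = x (k + 1)) (hi : 1 ≤ i) (hij : i ≤ j) :
    deltaM m y i j = deltaM m x (i + 1) (j + 1) := by
  rw [deltaM, deltaM, hy (i - 1) (by omega), Nat.sub_add_cancel hi, Nat.add_sub_cancel,
    sum_Icc_of_shift ((m : ℤ) - ·) hy]

end Delta

def dropHead (ℓ m : ℕ) (x : ℕ → ℤ) : ℕ → ℤ := fun i =>
  if i < ℓ - 1 then x (i + 1)
  else if i = ℓ - 1 then (m : ℤ) * (ℓ : ℤ) - ∑ k ∈ Icc 1 (ℓ - 1), x k else 0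

section DropHead

variable {ℓ m : ℕ} {x : ℕ → ℤ}

lemma dropHead_of_lt {i : ℕ} (hi : i < ℓ - 1) : dropHead ℓ m x i = x (i + 1) := if_pos hi

lemma pSum_dropHead {n : ℕ} (hn : n ≤ ℓ - 1) : pSum (dropHead ℓ m x) n = ∑ k ∈ Icc 1 n, x k := by
  rw [pSum, ← sum_range_add_one]
  exact sum_congr rfl fun k hk => dropHead_of_lt ((mem_range.1 hk).trans_le hn)

lemma isDyck_dropHead (hℓ : 1 ≤ ℓ) (hpos : ∀ i, 0 ≤ x i)
    (hbound : ∀ j ≤ ℓ - 1, ∑ k ∈ Icc 1 j, x k ≤ m * j) : IsDyck (ℓ - 1) m (dropHead ℓ m x) := by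
  obtain ⟨n, rfl⟩ := Nat.exists_eq_add_of_le' hℓ
  simp only [Nat.add_sub_cancel] at hbound ⊢
  have hlast : dropHead (n + 1) m x n = m * (n + 1) - ∑ k ∈ Icc 1 n, x k := by
    simp [dropHead]
  have hzero : ∀ i, n < i → dropHead (n + 1) m x i = 0 := fun i hi => by
    simp [dropHead, show ¬ i < n by omega, show i ≠ n by omega]
  refine ⟨fun i => ?_, fun i hi => ?_, ?_, hzero⟩
  · rcases lt_trichotomy i n with hi | rfl | hi
    · rw [dropHead_of_lt (by omega)]
      exact hpos _
    · rw [hlast]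
      linarith [hbound i le_rfl, (Nat.cast_nonneg m : (0 : ℤ) ≤ m)]
    · rw [hzero i hi]
  · rw [pSum_dropHead (by omega)]
    exact_mod_cast hbound (i + 1) hi
  · rw [pSum, sum_range_succ, ← pSum, pSum_dropHead (by omega), hlast]
    ring

end DropHead

section Degree

variable {ℓ m : ℕ} {x y : ℕ → ℤ}

lemma degrP_eq_row_one_add (hℓ : 2 ≤ ℓ) (hy : ∀ k < ℓ - 1, y k = x (k + 1)) :
    degrP ℓ m x = ∑ j ∈ Icc 1 (ℓ - 1), deltaP m x 1 j + degrP (ℓ - 1) m y := by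
  obtain ⟨n, rfl⟩ := Nat.exists_eq_add_of_le' hℓ
  simp only [degrP, Nat.reduceSubDiff, Nat.add_sub_cancel, sum_triangle_succ]
  congr 1
  refine sum_congr rfl fun i hi => sum_congr rfl fun j hj => ?_
  simp only [mem_Icc] at hi hj
  exact (deltaP_of_shift (fun k hk => hy k (by omega)) hj.1).symm

lemma degrM_eq_row_one_add (hℓ : 2 ≤ ℓ) (hy : ∀ k < ℓ - 1, y k = x (k + 1)) :
    degrM ℓ m x = ∑ j ∈ Icc 1 (ℓ - 1), deltaM m x 1 j + degrM (ℓ - 1) m y := by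
  obtain ⟨n, rfl⟩ := Nat.exists_eq_add_of_le' hℓ
  simp only [degrM, Nat.reduceSubDiff, Nat.add_sub_cancel, sum_triangle_succ]
  congr 1
  refine sum_congr rfl fun i hi => sum_congr rfl fun j hj => ?_
  simp only [mem_Icc] at hi hj
  exact (deltaM_of_shift (fun k hk => hy k (by omega)) hi.1 hj.1).symm

end Degree

theorem statement1_general (ℓ m : ℕ) (hl : 2 ≤ ℓ) (x : ℕ → ℤ)
    (hx : IsDyck ℓ m x)
    (hsmall : ∀ j, 1 ≤ j → j ≤ ℓ - 1 →
      ∑ k ∈ Finset.range (j + 1), (x k - (m : ℤ)) ≤ -(m : ℤ))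
    (x' : ℕ → ℤ)
    (hx' : x' = fun i => if i < ℓ - 1 then x (i + 1)
      else if i = ℓ - 1 then (m : ℤ) * (ℓ : ℤ) - ∑ k ∈ Finset.Icc 1 (ℓ - 1), x k else 0) :
    IsDyck (ℓ - 1) m x' ∧ degr ℓ m x = x 0 * ((ℓ : ℤ) - 1) + degr (ℓ - 1) m x' := by
  obtain rfl : x' = dropHead ℓ m x := hx'
  have hpos := hx.1
  have hrow : ∀ j ∈ Icc 1 (ℓ - 1), x 0 ≤ ∑ k ∈ Icc 1 j, ((m : ℤ) - x k) := fun j hj => by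
    have h := hsmall j (mem_Icc.1 hj).1 (mem_Icc.1 hj).2
    rw [sum_range_succ', sum_range_add_one (fun k => x k - m)] at h
    rw [sum_sub_eq_neg_sum_sub]
    linarith
  have hbound : ∀ j ≤ ℓ - 1, ∑ k ∈ Icc 1 j, x k ≤ m * j := fun j hj => by
    rcases j.eq_zero_or_pos with rfl | hj0
    · simp
    · have h := hrow j (mem_Icc.2 ⟨hj0, hj⟩)
      rw [sum_sub_distrib, sum_const, Nat.card_Icc, Nat.add_sub_cancel, nsmul_eq_mul] at h
      linarith [hpos 0]
  have hy : ∀ k < ℓ - 1, dropHead ℓ m x k = x (k + 1) := fun _ => dropHead_of_lt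
  refine ⟨isDyck_dropHead (by omega) hpos hbound, ?_⟩
  rw [degr, degr, degrP_eq_row_one_add hl hy, degrM_eq_row_one_add hl hy,
    sum_eq_zero fun j hj => deltaP_eq_zero (hpos 1) (by linarith [hpos 0, hrow j hj]),
    sum_congr rfl fun j hj => deltaM_eq_of_le (hpos 0) (hrow j hj), sum_const, Nat.card_Icc,
    nsmul_eq_mul]
  push_cast [Nat.cast_sub (by omega : 1 ≤ ℓ)]
  ring

/-- Claim `fitsin`: if `x = (x_0,…,x_ℓ)` is an `(ℓ,m)`-Dyck path all of whose
proper partial sums `(x_0−m)+⋯+(x_j−m)` (for `1 ≤ j ≤ ℓ−1`) are `≤ −m`, then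
deleting `x₀` yields an `(ℓ−1,m)`-Dyck path `x'` with
`degr(x) = x₀(ℓ−1) + degr(x')`. -/
theorem statement1 (ℓ m : ℕ) (hm : 1 ≤ m) (hl : 2 ≤ ℓ) (x : ℕ → ℤ)
    (hx : IsDyck ℓ m x)
    (hsmall : ∀ j, 1 ≤ j → j ≤ ℓ - 1 →
      ∑ k ∈ Finset.range (j + 1), (x k - (m : ℤ)) ≤ -(m : ℤ))
    (x' : ℕ → ℤ)
    (hx' : x' = fun i => if i < ℓ - 1 then x (i + 1)
      else if i = ℓ - 1 then (m : ℤ) * (ℓ : ℤ) - ∑ k ∈ Finset.Icc 1 (ℓ - 1), x k else 0) :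
    IsDyck (ℓ - 1) m x' ∧ degr ℓ m x = x 0 * ((ℓ : ℤ) - 1) + degr (ℓ - 1) m x' :=
  statement1_general ℓ m hl x hx hsmall x' hx'
end

section
/- Let m ≥ 1, ℓ ≥ 1, and let x ∈ T_{ℓ,m} with degr(x) < (ℓ−1)m, with position coordinates [a_0,a_1,…,a_ℓ]. Then a_j ≤ m for all 0 ≤ j ≤ ℓ. -/
open Finset

/-!
Suppose `a_s > m` for some `s`; then `s ≥ 2`, since `a_0 = a_1 = 0`. Put `c_k = min(m, a_k)`.
Because `x_0 = m` and `a_1 = 0`, the row `i = 1` of `degr⁻` is `c_2 + ⋯ + c_ℓ`. For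
`2 ≤ i < s`, `δ⁻_{i,s-1}` alone is at least `m - c_i`, and for each column `j ≥ s` the terms
`δ⁺_{ij}`, `s ≤ i ≤ j`, telescope to at least `a_s - a_{j+1} - 1 ≥ m - c_{j+1}`. As `c_s = m`,
these add up to `degr(x) ≥ (ℓ - 1)m`.
-/

lemma max_sub_le_sum_min {a y : ℕ → ℤ} {b : ℤ} {u v : ℕ} (huv : u ≤ v)
    (hy : ∀ i < v, 0 ≤ y i) (hdrop : ∀ i < v, a i - a (i + 1) ≤ y i) (hv : a v ≤ b) :
    max 0 (a u - b) ≤ ∑ i ∈ Ico u v, min (y i) (max 0 (a i - b)) := by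
  refine Nat.decreasingInduction (fun k hk ih => ?_) (by simp [hv]) huv
  rw [sum_eq_sum_Ico_succ_bot hk]
  have := hy k hk
  have := hdrop k hk
  omega

lemma sum_Icc_pred_eq_sum_Ico (f : ℕ → ℕ → ℤ) (ℓ : ℕ) :
    ∑ i ∈ Icc 1 (ℓ - 1), ∑ j ∈ Icc i (ℓ - 1), f i j = ∑ i ∈ Ico 1 ℓ, ∑ j ∈ Ico i ℓ, f i j := by
  refine sum_congr (by ext; simp; omega) fun i hi => sum_congr ?_ fun _ _ => rfl
  ext
  simp only [mem_Icc, mem_Ico] at hi ⊢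
  omega

lemma sum_add_sum_sub_add_sum_sub {c : ℕ → ℤ} {M : ℤ} {a s b : ℕ} (has : a ≤ s) (hsb : s < b)
    (hcs : c s = M) :
    ∑ k ∈ Ico a b, c k + ∑ k ∈ Ico a s, (M - c k) + ∑ k ∈ Ico (s + 1) b, (M - c k) =
      ((b - a : ℕ) : ℤ) * M := by
  have h : ∑ k ∈ Ico a b, (M - c k) =
      ∑ k ∈ Ico a s, (M - c k) + ∑ k ∈ Ico (s + 1) b, (M - c k) := by
    rw [← sum_Ico_consecutive _ has hsb.le, sum_eq_sum_Ico_succ_bot hsb, hcs, sub_self, zero_add]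
  rw [sum_sub_distrib, sum_const, Nat.card_Ico, nsmul_eq_mul] at h
  linarith

section DyckPositions

variable {ℓ m : ℕ} {x : ℕ → ℤ}

lemma dyckPos_zero : dyckPos ℓ m x 0 = 0 := by
  simp [dyckPos, pSum]

lemma dyckPos_succ {i : ℕ} (hi : i + 1 ≤ ℓ) :
    dyckPos ℓ m x (i + 1) = dyckPos ℓ m x i + m - x i := by
  simp only [dyckPos, hi, Nat.le_of_succ_le hi, if_true, pSum, sum_range_succ]
  push_cast
  ring

lemma dyckPos_eq_sum_range {i : ℕ} (hi : i ≤ ℓ) :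
    dyckPos ℓ m x i = ∑ k ∈ range i, ((m : ℤ) - x k) := by
  simp [dyckPos, hi, pSum, sum_sub_distrib, mul_comm]

lemma sum_Icc_sub_eq_dyckPos_sub {i j : ℕ} (hij : i ≤ j + 1) (hj : j + 1 ≤ ℓ) :
    ∑ k ∈ Icc i j, ((m : ℤ) - x k) = dyckPos ℓ m x (j + 1) - dyckPos ℓ m x i := by
  rw [dyckPos_eq_sum_range hj, dyckPos_eq_sum_range (hij.trans hj),
    ← Ico_add_one_right_eq_Icc, sum_Ico_eq_sub _ hij]

lemma deltaM_eq {i j : ℕ} (hij : i ≤ j + 1) (hj : j + 1 ≤ ℓ) :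
    deltaM m x i j = min (x (i - 1)) (max 0 (dyckPos ℓ m x (j + 1) - dyckPos ℓ m x i)) := by
  rw [deltaM, sum_Icc_sub_eq_dyckPos_sub hij hj]

lemma deltaP_eq {i j : ℕ} (hij : i ≤ j + 1) (hj : j + 1 ≤ ℓ) :
    deltaP m x i j = min (x i) (max 0 (dyckPos ℓ m x i - (dyckPos ℓ m x (j + 1) + 1))) := by
  have h : ∑ k ∈ Icc i j, (x k - (m : ℤ)) = dyckPos ℓ m x i - dyckPos ℓ m x (j + 1) := by
    rw [← neg_sub, ← sum_Icc_sub_eq_dyckPos_sub hij hj, ← sum_neg_distrib]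
    simp only [neg_sub]
  rw [deltaP, h, sub_sub]

lemma deltaM_nonneg (hx : ∀ k, 0 ≤ x k) (i j : ℕ) : 0 ≤ deltaM m x i j :=
  le_min (hx _) (le_max_left _ _)

lemma deltaP_nonneg (hx : ∀ k, 0 ≤ x k) (i j : ℕ) : 0 ≤ deltaP m x i j :=
  le_min (hx _) (le_max_left _ _)

lemma IsDyck.dyckPos_nonneg (hx : IsDyck ℓ m x) {i : ℕ} (hi : i ≤ ℓ) : 0 ≤ dyckPos ℓ m x i := by
  cases i with
  | zero => exact dyckPos_zero.ge
  | succ k =>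
    have := hx.2.1 k hi
    simp only [dyckPos, hi, if_true]
    push_cast
    linarith

lemma IsDyck.sub_min_le_deltaM (hx : IsDyck ℓ m x) {i s : ℕ} (hi : 1 ≤ i) (his : i < s)
    (hsℓ : s ≤ ℓ) (hs : m < dyckPos ℓ m x s) :
    m - min (m : ℤ) (dyckPos ℓ m x i) ≤ deltaM m x i (s - 1) := by
  have hstep := dyckPos_succ (ℓ := ℓ) (m := m) (x := x) (i := i - 1) (by omega)
  rw [Nat.sub_add_cancel hi] at hstep
  rw [deltaM_eq (ℓ := ℓ) (by omega) (by omega), Nat.sub_add_cancel (by omega : 1 ≤ s)]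
  have := hx.dyckPos_nonneg (i := i - 1) (by omega)
  have := hx.1 (i - 1)
  omega

lemma IsDyck.sub_min_le_sum_deltaP (hx : IsDyck ℓ m x) {s j : ℕ} (hsj : s ≤ j) (hj : j + 1 ≤ ℓ)
    (hs : m < dyckPos ℓ m x s) :
    m - min (m : ℤ) (dyckPos ℓ m x (j + 1)) ≤ ∑ i ∈ Ico s (j + 1), deltaP m x i j := by
  have htel := max_sub_le_sum_min (a := dyckPos ℓ m x) (y := x) (b := dyckPos ℓ m x (j + 1) + 1)
    (show s ≤ j + 1 by omega) (fun i _ => hx.1 i)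
    (fun i hi => by rw [dyckPos_succ (by omega)]; linarith [hx.1 i]) (by linarith)
  rw [sum_congr rfl fun i hi => deltaP_eq (by simp at hi; omega) hj]
  omega

lemma IsDyck.sum_le_degrM (hx : IsDyck ℓ m x) (hx0 : x 0 = m) {s : ℕ} (hs2 : 2 ≤ s) (hsℓ : s ≤ ℓ)
    (hs : m < dyckPos ℓ m x s) :
    ∑ k ∈ Ico 2 (ℓ + 1), min (m : ℤ) (dyckPos ℓ m x k) +
      ∑ k ∈ Ico 2 s, (m - min (m : ℤ) (dyckPos ℓ m x k)) ≤ degrM ℓ m x := by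
  have hA1 : dyckPos ℓ m x 1 = 0 := by
    rw [dyckPos_succ (ℓ := ℓ) (i := 0) (by omega), dyckPos_zero, hx0]; ring
  rw [degrM, sum_Icc_pred_eq_sum_Ico,
    sum_eq_sum_Ico_succ_bot (show 1 < ℓ by omega) (fun i => ∑ j ∈ Ico i ℓ, deltaM m x i j)]
  gcongr ?_ + ?_
  · rw [← sum_Ico_add' _ 1 ℓ 1]
    refine (sum_congr rfl fun j hj => ?_).le
    simp only [mem_Ico] at hj
    rw [deltaM_eq (ℓ := ℓ) (by omega) (by omega), hA1, hx0, sub_zero,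
      max_eq_right (hx.dyckPos_nonneg (by omega))]
  · calc ∑ k ∈ Ico 2 s, (m - min (m : ℤ) (dyckPos ℓ m x k))
        ≤ ∑ i ∈ Ico 2 s, ∑ j ∈ Ico i ℓ, deltaM m x i j := by
          refine sum_le_sum fun i hi => ?_
          simp only [mem_Ico] at hi
          exact (hx.sub_min_le_deltaM (by omega) hi.2 hsℓ hs).trans
            (single_le_sum (fun j _ => deltaM_nonneg hx.1 i j) (by simp; omega))
      _ ≤ ∑ i ∈ Ico 2 ℓ, ∑ j ∈ Ico i ℓ, deltaM m x i j :=
          sum_le_sum_of_subset_of_nonneg (Ico_subset_Ico_right hsℓ)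
            fun i _ _ => sum_nonneg fun j _ => deltaM_nonneg hx.1 i j

lemma IsDyck.sum_le_degrP (hx : IsDyck ℓ m x) {s : ℕ} (hs1 : 1 ≤ s)
    (hs : m < dyckPos ℓ m x s) :
    ∑ k ∈ Ico (s + 1) (ℓ + 1), (m - min (m : ℤ) (dyckPos ℓ m x k)) ≤ degrP ℓ m x := by
  rw [degrP, sum_Icc_pred_eq_sum_Ico, sum_Ico_Ico_comm, ← sum_Ico_add' _ s ℓ 1]
  calc ∑ j ∈ Ico s ℓ, (m - min (m : ℤ) (dyckPos ℓ m x (j + 1)))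
      ≤ ∑ j ∈ Ico s ℓ, ∑ i ∈ Ico s (j + 1), deltaP m x i j :=
        sum_le_sum fun j hj => hx.sub_min_le_sum_deltaP (mem_Ico.1 hj).1 (mem_Ico.1 hj).2 hs
    _ ≤ ∑ j ∈ Ico s ℓ, ∑ i ∈ Ico 1 (j + 1), deltaP m x i j :=
        sum_le_sum fun j _ => sum_le_sum_of_subset_of_nonneg (Ico_subset_Ico_left hs1)
          fun i _ _ => deltaP_nonneg hx.1 i j
    _ ≤ ∑ j ∈ Ico 1 ℓ, ∑ i ∈ Ico 1 (j + 1), deltaP m x i j :=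
        sum_le_sum_of_subset_of_nonneg (Ico_subset_Ico_left hs1)
          fun j _ _ => sum_nonneg fun i _ => deltaP_nonneg hx.1 i j

lemma IsDyck.mul_le_degr_of_lt_dyckPos (hx : IsDyck ℓ m x) (hx0 : x 0 = m) {s : ℕ} (hs2 : 2 ≤ s)
    (hsℓ : s ≤ ℓ) (hs : m < dyckPos ℓ m x s) :
    (((ℓ - 1) * m : ℕ) : ℤ) ≤ degr ℓ m x := by
  have hsplit := sum_add_sum_sub_add_sum_sub (c := fun k => min (m : ℤ) (dyckPos ℓ m x k))
    hs2 (show s < ℓ + 1 by omega) (min_eq_left hs.le)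
  rw [show ℓ + 1 - 2 = ℓ - 1 by omega] at hsplit
  rw [degr]
  push_cast
  linarith [hx.sum_le_degrM hx0 hs2 hsℓ hs, hx.sum_le_degrP (by omega) hs]

end DyckPositions

theorem statement8_general (ℓ m : ℕ) (x : ℕ → ℤ)
    (hx : IsDyck ℓ m x) (hx0 : x 0 = (m : ℤ))
    (hdeg : degr ℓ m x < (((ℓ - 1) * m : ℕ) : ℤ)) :
    ∀ j ≤ ℓ, dyckPos ℓ m x j ≤ (m : ℤ) := by
  intro s hsℓ
  by_contra! hs
  have hs2 : 2 ≤ s := by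
    by_contra! hs2
    interval_cases s
    · rw [dyckPos_zero] at hs
      omega
    · rw [dyckPos_succ (i := 0) hsℓ, dyckPos_zero, hx0] at hs
      omega
  exact hdeg.not_ge (hx.mul_le_degr_of_lt_dyckPos hx0 hs2 hsℓ hs)

/-- Claim `fitin`: if `x ∈ 𝐓_{ℓ,m}` has `degr(x) < (ℓ−1)m`, then all position
coordinates of `x` are at most `m`. -/
theorem statement8 (ℓ m : ℕ) (hm : 1 ≤ m) (hl : 1 ≤ ℓ) (x : ℕ → ℤ)
    (hx : IsDyck ℓ m x) (hx0 : x 0 = (m : ℤ))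
    (hdeg : degr ℓ m x < (((ℓ - 1) * m : ℕ) : ℤ)) :
    ∀ j ≤ ℓ, dyckPos ℓ m x j ≤ (m : ℤ) :=
  statement8_general ℓ m x hx hx0 hdeg
end
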